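/- arXiv:1505.02179 — 2 statements merged into one kernel-verified Lean document; each statement's English description precedes it below -/
import Mathlib

section
/- For 0 < q < 1 and |t| < 1, the q-exponential series e_q(t) = ∑_{n≥0} t^n/(q;q)_n converges and equals 1/(t;q)_∞, where (t;q)_∞ = ∏_{k≥0}(1 - t q^k). -/
/-!
Euler's argument: `e_q(x) - e_q(qx) = x e_q(x)`, so iterating gives
`e_q(q^N t) = (t;q)_N e_q(t)`. As `N → ∞` the left side tends to `e_q(0) = 1` by continuity of
`e_q` at `0` (uniform convergence, since `1/(q;q)_n ≤ 1/(q;q)_∞`), and the right side tends to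
`(t;q)_∞ e_q(t)`.
-/

/-- The q-Pochhammer symbol `(a;q)_n = ∏_{k=0}^{n-1} (1 - a q^k)`. -/
noncomputable def qPoch (q a : ℝ) (n : ℕ) : ℝ := ∏ k ∈ Finset.range n, (1 - a * q ^ k)

/-- `(a;q)_∞ = ∏_{k=0}^{∞} (1 - a q^k)`. -/
noncomputable def qPochInf (q a : ℝ) : ℝ := ∏' k : ℕ, (1 - a * q ^ k)

open Filter Topology Metric

noncomputable def qExp (q x : ℝ) : ℝ := ∑' n : ℕ, x ^ n / qPoch q q n

variable {q a x t : ℝ}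

section qPoch

lemma qPoch_zero : qPoch q a 0 = 1 := Finset.prod_range_zero _

lemma qPoch_succ (n : ℕ) : qPoch q a (n + 1) = qPoch q a n * (1 - a * q ^ n) :=
  Finset.prod_range_succ _ n

lemma one_sub_mul_pow_pos (ha : |a| < 1) (hq : |q| ≤ 1) (k : ℕ) : 0 < 1 - a * q ^ k := by
  have : |a * q ^ k| < 1 := by
    rw [abs_mul, abs_pow]
    exact (mul_le_of_le_one_right (abs_nonneg a) (pow_le_one₀ (abs_nonneg q) hq)).trans_lt ha
  linarith [le_abs_self (a * q ^ k)]

lemma qPoch_pos (ha : |a| < 1) (hq : |q| ≤ 1) (n : ℕ) : 0 < qPoch q a n :=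
  Finset.prod_pos fun k _ => one_sub_mul_pow_pos ha hq k

lemma summable_neg_mul_pow (hq : |q| < 1) : Summable fun k : ℕ => -(a * q ^ k) :=
  ((summable_geometric_of_abs_lt_one hq).mul_left a).neg

lemma tendsto_qPoch (hq : |q| < 1) : Tendsto (qPoch q a) atTop (𝓝 (qPochInf q a)) := by
  have h := (Real.multipliable_one_add_of_summable (summable_neg_mul_pow (a := a) hq))
    |>.tendsto_prod_tprod_nat
  simp only [← sub_eq_add_neg] at h
  exact h

lemma qPochInf_pos (ha : |a| < 1) (hq : |q| < 1) : 0 < qPochInf q a := by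
  have hlog : Summable fun k : ℕ => Real.log (1 - a * q ^ k) := by
    simpa only [← sub_eq_add_neg] using
      Real.summable_log_one_add_of_summable (summable_neg_mul_pow (a := a) hq)
  rw [qPochInf, ← Real.rexp_tsum_eq_tprod (one_sub_mul_pow_pos ha hq.le) hlog]
  exact Real.exp_pos _

lemma antitone_qPoch (ha0 : 0 ≤ a) (ha1 : a ≤ 1) (hq0 : 0 ≤ q) (hq1 : q ≤ 1) :
    Antitone (qPoch q a) := by
  have hfactor (k : ℕ) : 0 ≤ 1 - a * q ^ k ∧ 1 - a * q ^ k ≤ 1 := by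
    have := mul_le_one₀ ha1 (pow_nonneg hq0 k) (pow_le_one₀ hq0 hq1)
    constructor <;> nlinarith [pow_nonneg hq0 k]
  refine antitone_nat_of_succ_le fun n => ?_
  rw [qPoch_succ]
  exact mul_le_of_le_one_right (Finset.prod_nonneg fun k _ => (hfactor k).1) (hfactor n).2

lemma qPochInf_le_qPoch (ha0 : 0 ≤ a) (ha1 : a ≤ 1) (hq0 : 0 ≤ q) (hq1 : q < 1) (n : ℕ) :
    qPochInf q a ≤ qPoch q a n :=
  (antitone_qPoch ha0 ha1 hq0 hq1.le).le_of_tendsto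
    (tendsto_qPoch (abs_lt.mpr ⟨by linarith, hq1⟩)) n

end qPoch

section qExp

lemma qExp_zero : qExp q 0 = 1 := by
  rw [qExp, tsum_eq_single 0 fun n hn => by simp [hn]]
  simp [qPoch_zero]

variable (hq0 : 0 < q) (hq1 : q < 1)
include hq0 hq1

lemma qPochInf_self_pos : 0 < qPochInf q q :=
  have hq : |q| < 1 := abs_lt.mpr ⟨by linarith, hq1⟩
  qPochInf_pos hq hq

lemma norm_qExp_term_le (n : ℕ) : ‖x ^ n / qPoch q q n‖ ≤ |x| ^ n / qPochInf q q := by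
  have hq : |q| < 1 := abs_lt.mpr ⟨by linarith, hq1⟩
  rw [Real.norm_eq_abs, abs_div, abs_pow, abs_of_pos (qPoch_pos hq hq.le n)]
  exact div_le_div_of_nonneg_left (by positivity) (qPochInf_self_pos hq0 hq1)
    (qPochInf_le_qPoch hq0.le hq1.le hq0.le hq1 n)

lemma summable_qExp (hx : |x| < 1) : Summable fun n : ℕ => x ^ n / qPoch q q n :=
  .of_norm_bounded ((summable_geometric_of_lt_one (abs_nonneg x) hx).div_const _)
    (norm_qExp_term_le hq0 hq1)

lemma continuousOn_qExp {r : ℝ} (hr : r < 1) : ContinuousOn (qExp q) (closedBall 0 r) := by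
  rcases lt_or_ge r 0 with hr0 | hr0
  · simp [closedBall_eq_empty.mpr hr0]
  refine continuousOn_tsum (u := fun n : ℕ => r ^ n / qPochInf q q) (fun n => by fun_prop)
    ((summable_geometric_of_lt_one hr0 hr).div_const _) fun n y hy => ?_
  have hy : |y| ≤ r := by simpa using hy
  have := qPochInf_self_pos hq0 hq1
  exact (norm_qExp_term_le hq0 hq1 n).trans (by gcongr)

lemma qExp_term_sub_qExp_term (n : ℕ) :
    x ^ (n + 1) / qPoch q q (n + 1) - (q * x) ^ (n + 1) / qPoch q q (n + 1)
      = x * (x ^ n / qPoch q q n) := by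
  have hq : |q| < 1 := abs_lt.mpr ⟨by linarith, hq1⟩
  have hn := (qPoch_pos hq hq.le n).ne'
  have hfactor := (one_sub_mul_pow_pos hq hq.le n).ne'
  rw [qPoch_succ]
  field_simp
  ring

lemma qExp_mul_left (hx : |x| < 1) : qExp q (q * x) = (1 - x) * qExp q x := by
  have hqx : |q * x| < 1 := by
    rw [abs_mul, abs_of_pos hq0]; nlinarith [abs_nonneg x]
  have hdiff : qExp q x - qExp q (q * x) = x * qExp q x := by
    rw [qExp, qExp, ← (summable_qExp hq0 hq1 hx).tsum_sub (summable_qExp hq0 hq1 hqx),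
      (summable_qExp hq0 hq1 hx |>.sub (summable_qExp hq0 hq1 hqx)).tsum_eq_zero_add]
    simp only [qExp_term_sub_qExp_term hq0 hq1, tsum_mul_left]
    simp
  linear_combination -hdiff

lemma qExp_pow_mul (ht : |t| < 1) (N : ℕ) : qExp q (q ^ N * t) = qPoch q t N * qExp q t := by
  induction N with
  | zero => simp [qPoch_zero]
  | succ N ih =>
    have hNt : |q ^ N * t| < 1 := by
      rw [abs_mul, abs_pow, abs_of_pos hq0]
      exact (mul_le_of_le_one_left (abs_nonneg t) (pow_le_one₀ hq0.le hq1.le)).trans_lt ht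
    rw [pow_succ', mul_assoc, qExp_mul_left hq0 hq1 hNt, ih, qPoch_succ]
    ring

end qExp

/-- For `0 < q < 1` and `|t| < 1`, the series `e_q(t) = ∑_{n≥0} t^n/(q;q)_n`
converges and equals `1/(t;q)_∞`. -/
theorem qExp_eq_one_div_qPochInf (q t : ℝ) (hq0 : 0 < q) (hq1 : q < 1) (ht : |t| < 1) :
    HasSum (fun n : ℕ => t ^ n / qPoch q q n) (1 / qPochInf q t) := by
  have hq : |q| < 1 := abs_lt.mpr ⟨by linarith, hq1⟩
  have hpow : Tendsto (fun N : ℕ => q ^ N * t) atTop (𝓝[closedBall 0 |t|] 0) := by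
    refine tendsto_nhdsWithin_iff.mpr ⟨?_, .of_forall fun N => ?_⟩
    · simpa using (tendsto_pow_atTop_nhds_zero_of_abs_lt_one hq).mul_const t
    · simpa [abs_mul, abs_of_pos hq0] using
        mul_le_of_le_one_left (abs_nonneg t) (pow_le_one₀ hq0.le hq1.le)
  have hlim_one : Tendsto (fun N : ℕ => qPoch q t N * qExp q t) atTop (𝓝 1) := by
    have := ((continuousOn_qExp hq0 hq1 ht 0 (by simp)).tendsto).comp hpow
    simpa only [Function.comp_def, qExp_pow_mul hq0 hq1 ht, qExp_zero] using this
  have hprod : qPochInf q t * qExp q t = 1 :=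
    tendsto_nhds_unique ((tendsto_qPoch hq).mul_const _) hlim_one
  rw [← eq_one_div_of_mul_eq_one_right hprod]
  exact (summable_qExp hq0 hq1 ht).hasSum
end

section
/- Let 0 < q < 1, a ∈ ℝ, and u, v > 0 with |a u| < v. Define sin_q(t) = (e_q(it) - e_q(-it))/(2i). Then N_q(sin_q(a x))(u;v) = a u/(v² + a² u²). -/
/-! The q-exponential satisfies `e_q(z)(1 - z) = e_q(qz)`, hence `e_q(q)(q;q)_n = e_q(q^{n+1})`,
which tends to `e_q(0) = 1`: thus `(q;q)_∞ e_q(q) = 1`. Expanding `e_q(c q^k)` and summing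
over `k` first, `∑_k q^k e_q(c q^k)/(q;q)_k = ∑_n c^n e_q(q^{n+1})/(q;q)_n = e_q(q)/(1 - c)`,
so `N_q(e_q(c x))(u;v) = 1/(v - c u)`; the formula for `sin_q` is the combination of the cases
`c = ± i a`. -/

open Complex

/-- The complex q-Pochhammer symbol `(a;q)_n`. -/
noncomputable def qPochC (q a : ℂ) (n : ℕ) : ℂ := ∏ k ∈ Finset.range n, (1 - a * q ^ k)

/-- The complex q-exponential `e_q(t) = ∑_{n≥0} t^n/(q;q)_n`. -/
noncomputable def qExpC (q t : ℂ) : ℂ := ∑' n : ℕ, t ^ n / qPochC q q n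

/-- `sin_q(t) = (e_q(it) - e_q(-it))/(2i)`. -/
noncomputable def qSin (q t : ℂ) : ℂ := (qExpC q (I * t) - qExpC q (-(I * t))) / (2 * I)

/-- The first-type q-Natural transform of a complex-valued function. -/
noncomputable def qNaturalC (q : ℝ) (f : ℝ → ℂ) (u v : ℝ) : ℂ :=
  (∏' k : ℕ, (1 - (q : ℂ) * (q : ℂ) ^ k)) / (v : ℂ) *
    ∑' k : ℕ, (q : ℂ) ^ k * f (u / v * q ^ k) / qPochC q q k

open Filter Topology

lemma qPochC_zero (q a : ℂ) : qPochC q a 0 = 1 := Finset.prod_range_zero _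

lemma qPochC_succ (q a : ℂ) (n : ℕ) :
    qPochC q a (n + 1) = qPochC q a n * (1 - a * q ^ n) := Finset.prod_range_succ _ _

lemma one_sub_ne_zero_of_norm_lt_one {w : ℂ} (hw : ‖w‖ < 1) : 1 - w ≠ 0 :=
  sub_ne_zero.mpr fun h => by simp [← h] at hw

section

variable {q : ℂ}

lemma norm_mul_pow_lt_one (hq : ‖q‖ < 1) (k : ℕ) : ‖q * q ^ k‖ < 1 := by
  rw [← pow_succ', norm_pow]
  exact pow_lt_one₀ (norm_nonneg q) hq k.succ_ne_zero

lemma qPochC_self_ne_zero (hq : ‖q‖ < 1) (n : ℕ) : qPochC q q n ≠ 0 :=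
  Finset.prod_ne_zero_iff.mpr fun k _ => one_sub_ne_zero_of_norm_lt_one (norm_mul_pow_lt_one hq k)

lemma tendsto_one_sub_mul_pow (hq : ‖q‖ < 1) :
    Tendsto (fun n : ℕ => 1 - q * q ^ n) atTop (𝓝 1) := by
  simpa using tendsto_const_nhds.sub ((tendsto_pow_atTop_nhds_zero_of_norm_lt_one hq).const_mul q)

lemma summable_pow_div_qPochC (hq : ‖q‖ < 1) {z : ℂ} (hz : ‖z‖ < 1) :
    Summable fun n : ℕ => z ^ n / qPochC q q n := by
  obtain ⟨r, hzr, hr1⟩ := exists_between hz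
  have hr0 : 0 < r := (norm_nonneg z).trans_lt hzr
  refine summable_of_ratio_norm_eventually_le hr1 ?_
  have hlarge : ∀ᶠ n : ℕ in atTop, ‖z‖ / r < ‖1 - q * q ^ n‖ :=
    (tendsto_one_sub_mul_pow hq).norm.eventually
      (lt_mem_nhds (by rwa [norm_one, div_lt_one hr0]))
  filter_upwards [hlarge] with n hn
  have hpos : 0 < ‖1 - q * q ^ n‖ := (div_nonneg (norm_nonneg z) hr0.le).trans_lt hn
  rw [qPochC_succ, pow_succ, mul_div_mul_comm, norm_mul, norm_div z, mul_comm r]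
  gcongr
  rw [div_le_iff₀ hpos, mul_comm]
  exact ((div_lt_iff₀ hr0).mp hn).le

lemma qExpC_zero (q : ℂ) : qExpC q 0 = 1 := by
  rw [qExpC, tsum_eq_single 0 fun n hn => by simp [zero_pow hn]]
  simp [qPochC_zero]

lemma continuousAt_qExpC_zero (hq : ‖q‖ < 1) : ContinuousAt (qExpC q) 0 := by
  have hr : ‖(2⁻¹ : ℂ)‖ < 1 := by norm_num
  have hball : ContinuousOn (qExpC q) (Metric.closedBall 0 2⁻¹) := by
    refine continuousOn_tsum (fun n => ((continuous_pow n).div_const _).continuousOn)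
      (summable_pow_div_qPochC hq hr).norm fun n z hz => ?_
    rw [mem_closedBall_zero_iff] at hz
    rw [norm_div, norm_div, norm_pow, norm_pow]
    gcongr
    simpa using hz
  exact hball.continuousAt (Metric.closedBall_mem_nhds 0 (by norm_num))

lemma qExpC_mul_one_sub (hq : ‖q‖ < 1) {z : ℂ} (hz : ‖z‖ < 1) :
    qExpC q z * (1 - z) = qExpC q (q * z) := by
  have hqz : ‖q * z‖ < 1 := by
    rw [norm_mul]
    nlinarith [norm_nonneg q, norm_nonneg z]
  set d : ℕ → ℂ := fun n => z ^ n / qPochC q q n - (q * z) ^ n / qPochC q q n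
  have hd : HasSum d (qExpC q z - qExpC q (q * z)) :=
    (summable_pow_div_qPochC hq hz).hasSum.sub (summable_pow_div_qPochC hq hqz).hasSum
  have hd_succ : ∀ n, d (n + 1) = z * (z ^ n / qPochC q q n) := by
    intro n
    have := one_sub_ne_zero_of_norm_lt_one (norm_mul_pow_lt_one hq n)
    have := qPochC_self_ne_zero hq n
    simp only [d, qPochC_succ]
    field_simp
    ring
  have hshift : HasSum d (z * qExpC q z) := by
    refine (hasSum_nat_add_iff' 1).mp ?_
    have hd_zero : d 0 = 0 := by simp [d]
    rw [Finset.sum_range_one, hd_zero, sub_zero, funext hd_succ]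
    exact (summable_pow_div_qPochC hq hz).hasSum.mul_left z
  linear_combination hd.unique hshift

lemma qExpC_self_mul_qPochC (hq : ‖q‖ < 1) (n : ℕ) :
    qExpC q q * qPochC q q n = qExpC q (q ^ (n + 1)) := by
  induction n with
  | zero => simp [qPochC_zero]
  | succ n ih =>
    have hqn : ‖q ^ (n + 1)‖ < 1 := by
      rw [pow_succ']
      exact norm_mul_pow_lt_one hq n
    rw [qPochC_succ, ← mul_assoc, ih, ← pow_succ', qExpC_mul_one_sub hq hqn, ← pow_succ']

lemma tprod_one_sub_mul_pow_mul_qExpC_self (hq : ‖q‖ < 1) :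
    (∏' k : ℕ, (1 - q * q ^ k)) * qExpC q q = 1 := by
  have hmult : Multipliable fun k : ℕ => 1 - q * q ^ k := by
    simpa [sub_eq_add_neg] using Complex.multipliable_one_add_of_summable
      ((summable_geometric_of_norm_lt_one hq).mul_left q).neg
  have hpartial : Tendsto (fun n => qPochC q q n * qExpC q q) atTop
      (𝓝 ((∏' k : ℕ, (1 - q * q ^ k)) * qExpC q q)) :=
    hmult.hasProd.tendsto_prod_nat.mul_const _
  have hlim : Tendsto (fun n : ℕ => qExpC q (q ^ (n + 1))) atTop (𝓝 1) := by
    rw [← qExpC_zero q]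
    exact (continuousAt_qExpC_zero hq).tendsto.comp
      ((tendsto_pow_atTop_nhds_zero_of_norm_lt_one hq).comp (tendsto_add_atTop_nat 1))
  refine tendsto_nhds_unique hpartial ?_
  simpa only [mul_comm, qExpC_self_mul_qPochC hq] using hlim

theorem hasSum_qExpC_transform (hq : ‖q‖ < 1) {c : ℂ} (hc : ‖c‖ < 1) :
    HasSum (fun k : ℕ => q ^ k * qExpC q (c * q ^ k) / qPochC q q k) (qExpC q q / (1 - c)) := by
  have hqk : ∀ k : ℕ, ‖q ^ k‖ ≤ 1 := fun k => by
    rw [norm_pow]; exact pow_le_one₀ (norm_nonneg q) hq.le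
  set g : ℕ × ℕ → ℂ := fun p => q ^ p.1 / qPochC q q p.1 * ((c * q ^ p.1) ^ p.2 / qPochC q q p.2)
  have hg : Summable g := by
    refine .of_norm_bounded ((summable_pow_div_qPochC hq hq).norm.mul_norm
      (summable_pow_div_qPochC hq hc).norm) fun ⟨k, n⟩ => ?_
    calc ‖g (k, n)‖ = ‖q ^ k / qPochC q q k * (c ^ n / qPochC q q n)‖ * ‖q ^ k‖ ^ n := by
          rw [← norm_pow, ← norm_mul]; simp only [g]; ring_nf
      _ ≤ ‖q ^ k / qPochC q q k * (c ^ n / qPochC q q n)‖ :=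
          mul_le_of_le_one_right (norm_nonneg _) (pow_le_one₀ (norm_nonneg _) (hqk k))
  have hrows : ∀ k, HasSum (fun n => g (k, n)) (q ^ k * qExpC q (c * q ^ k) / qPochC q q k) := by
    intro k
    have hck : ‖c * q ^ k‖ < 1 := by
      rw [norm_mul]; exact (mul_le_of_le_one_right (norm_nonneg c) (hqk k)).trans_lt hc
    have h := (summable_pow_div_qPochC hq hck).hasSum.mul_left (q ^ k / qPochC q q k)
    rwa [← qExpC, ← mul_div_right_comm] at h
  have hcols : ∀ n, HasSum (fun k => g (k, n)) (c ^ n * qExpC q q) := by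
    intro n
    have hgn : (fun k => g (k, n))
        = fun k => c ^ n / qPochC q q n * ((q ^ (n + 1)) ^ k / qPochC q q k) := by
      funext k; simp only [g]; ring
    have hqn : ‖q ^ (n + 1)‖ < 1 := by rw [pow_succ']; exact norm_mul_pow_lt_one hq n
    have hval : c ^ n * qExpC q q = c ^ n / qPochC q q n * qExpC q (q ^ (n + 1)) := by
      rw [← qExpC_self_mul_qPochC hq n]
      field_simp [qPochC_self_ne_zero hq n]
    have h := (summable_pow_div_qPochC hq hqn).hasSum.mul_left (c ^ n / qPochC q q n)
    rwa [← qExpC, ← hval, ← hgn] at h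
  have htotal := ((Equiv.prodComm ℕ ℕ).hasSum_iff.mpr hg.hasSum).prod_fiberwise hcols
  have hgeom := (hasSum_geometric_of_norm_lt_one hc).mul_right (qExpC q q)
  rw [div_eq_inv_mul, hgeom.unique htotal]
  exact hg.hasSum.prod_fiberwise hrows

theorem hasSum_qSin_transform (hq : ‖q‖ < 1) {b : ℂ} (hb : ‖b‖ < 1) :
    HasSum (fun k : ℕ => q ^ k * qSin q (b * q ^ k) / qPochC q q k)
      (qExpC q q * b / (1 + b ^ 2)) := by
  have hIb : ‖I * b‖ < 1 := by rwa [norm_mul, norm_I, one_mul]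
  have hIb' : ‖-(I * b)‖ < 1 := by rwa [norm_neg]
  have h1 := one_sub_ne_zero_of_norm_lt_one hIb
  have h2 := one_sub_ne_zero_of_norm_lt_one hIb'
  have hsplit : (fun k : ℕ => q ^ k * qSin q (b * q ^ k) / qPochC q q k) = fun k =>
      (q ^ k * qExpC q (I * b * q ^ k) / qPochC q q k
        - q ^ k * qExpC q (-(I * b) * q ^ k) / qPochC q q k) / (2 * I) := by
    funext k
    simp only [qSin, ← mul_assoc, neg_mul]
    ring
  have hval : qExpC q q * b / (1 + b ^ 2) =
      (qExpC q q / (1 - I * b) - qExpC q q / (1 - -(I * b))) / (2 * I) := by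
    have hfactor : 1 + b ^ 2 = (1 - I * b) * (1 - -(I * b)) := by
      linear_combination b ^ 2 * I_sq
    rw [hfactor, div_sub_div _ _ h1 h2]
    field_simp
    ring
  rw [hsplit, hval]
  exact ((hasSum_qExpC_transform hq hIb).sub (hasSum_qExpC_transform hq hIb')).div_const _

end

theorem qNatural_qSin_general (q a u v : ℝ) (hq0 : 0 < q) (hq1 : q < 1)
    (h : |a * u| < v) :
    qNaturalC q (fun x => qSin q (a * x)) u v
      = (a * u : ℝ) / ((v ^ 2 + a ^ 2 * u ^ 2 : ℝ) : ℂ) := by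
  have hv : 0 < v := (abs_nonneg _).trans_lt h
  have hq : ‖(q : ℂ)‖ < 1 := by rwa [norm_real, Real.norm_of_nonneg hq0.le]
  set b : ℝ := a * u / v with hb_def
  have hb : ‖(b : ℂ)‖ < 1 := by
    rwa [norm_real, Real.norm_eq_abs, hb_def, abs_div, abs_of_pos hv, div_lt_one hv]
  have hterms : (fun k : ℕ => (q : ℂ) ^ k * qSin q (a * ((u / v * q ^ k : ℝ) : ℂ)) / qPochC q q k)
      = fun k => (q : ℂ) ^ k * qSin q (b * (q : ℂ) ^ k) / qPochC q q k := by
    funext k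
    push_cast [hb_def]
    ring_nf
  have hv0 : (v : ℂ) ≠ 0 := ofReal_ne_zero.mpr hv.ne'
  rw [qNaturalC, hterms, (hasSum_qSin_transform hq hb).tsum_eq]
  calc (∏' k : ℕ, (1 - (q : ℂ) * (q : ℂ) ^ k)) / v * (qExpC q q * b / (1 + (b : ℂ) ^ 2))
      = ((∏' k : ℕ, (1 - (q : ℂ) * (q : ℂ) ^ k)) * qExpC q q) * (b / (1 + (b : ℂ) ^ 2) / v) := by
        ring
    _ = (a * u : ℝ) / ((v ^ 2 + a ^ 2 * u ^ 2 : ℝ) : ℂ) := by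
        rw [tprod_one_sub_mul_pow_mul_qExpC_self hq, one_mul, hb_def]
        push_cast
        field_simp

/-- For `0 < q < 1`, `u, v > 0`, `a ∈ ℝ` with `|a u| < v`,
`N_q(sin_q(a x))(u;v) = a u/(v² + a² u²)`. -/
theorem qNatural_qSin (q a u v : ℝ) (hq0 : 0 < q) (hq1 : q < 1)
    (hu : 0 < u) (hv : 0 < v) (h : |a * u| < v) :
    qNaturalC q (fun x => qSin q (a * x)) u v
      = (a * u : ℝ) / ((v ^ 2 + a ^ 2 * u ^ 2 : ℝ) : ℂ) :=
  qNatural_qSin_general q a u v hq0 hq1 h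
end
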